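/- arXiv:2211.12006 — 2 statements merged into one kernel-verified Lean document; each statement's English description precedes it below -/
import Mathlib

section
/- (Correctness of normalization rule NF1.) Let D̂ and Ê be ALC concepts and let A be a concept name occurring neither in D̂ nor in Ê. (i) Every crisp interpretation J satisfying both D̂ ⊑ A and A ⊑ Ê also satisfies D̂ ⊑ Ê. (ii) For every crisp interpretation I satisfying D̂ ⊑ Ê there exists a crisp interpretation J with the same domain, interpreting every concept name other than A and every role name the same as I, that satisfies both D̂ ⊑ A and A ⊑ Ê. -/
/-- ALC concepts over concept names `NC` and role names `NR`. -/
inductive ALCConcept (NC NR : Type) : Type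
  | top : ALCConcept NC NR
  | bot : ALCConcept NC NR
  | atom (A : NC) : ALCConcept NC NR
  | neg (C : ALCConcept NC NR) : ALCConcept NC NR
  | conj (C D : ALCConcept NC NR) : ALCConcept NC NR
  | disj (C D : ALCConcept NC NR) : ALCConcept NC NR
  | ex (r : NR) (C : ALCConcept NC NR) : ALCConcept NC NR
  | all (r : NR) (C : ALCConcept NC NR) : ALCConcept NC NR

namespace ALCConcept

/-- The set of concept names occurring in a concept. -/
def conceptNames {NC NR : Type} : ALCConcept NC NR → Set NC
  | top => ∅
  | bot => ∅
  | atom A => {A}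
  | neg C => C.conceptNames
  | conj C D => C.conceptNames ∪ D.conceptNames
  | disj C D => C.conceptNames ∪ D.conceptNames
  | ex _ C => C.conceptNames
  | all _ C => C.conceptNames

/-- The set of role names occurring in a concept. -/
def roleNames {NC NR : Type} : ALCConcept NC NR → Set NR
  | top => ∅
  | bot => ∅
  | atom _ => ∅
  | neg C => C.roleNames
  | conj C D => C.roleNames ∪ D.roleNames
  | disj C D => C.roleNames ∪ D.roleNames
  | ex r C => insert r C.roleNames
  | all r C => insert r C.roleNames

end ALCConcept

/-- A crisp interpretation with domain `Δ`. -/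
structure Interp (NC NR Δ : Type) : Type where
  atom : NC → Set Δ
  role : NR → Set (Δ × Δ)

/-- Extension of a crisp interpretation to all ALC concepts. -/
def Interp.eval {NC NR Δ : Type} (I : Interp NC NR Δ) : ALCConcept NC NR → Set Δ
  | .top => Set.univ
  | .bot => ∅
  | .atom A => I.atom A
  | .neg C => (I.eval C)ᶜ
  | .conj C D => I.eval C ∩ I.eval D
  | .disj C D => I.eval C ∪ I.eval D
  | .ex r C => {a | ∃ b, (a, b) ∈ I.role r ∧ b ∈ I.eval C}
  | .all r C => {a | ∀ b, (a, b) ∈ I.role r → b ∈ I.eval C}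

/-- The concept inclusion `C ⊑ D` is true in (satisfied by) `I`. -/
def Interp.satInclusion {NC NR Δ : Type} (I : Interp NC NR Δ)
    (C D : ALCConcept NC NR) : Prop :=
  I.eval C ⊆ I.eval D


theorem eval_congr {NC NR Δ : Type} (I J : Interp NC NR Δ)
    (C : ALCConcept NC NR)
    (hA : ∀ B ∈ C.conceptNames, J.atom B = I.atom B)
    (hR : ∀ r, J.role r = I.role r) : J.eval C = I.eval C := by
  induction C with
  | top => rfl
  | bot => rfl
  | atom B => exact hA B rfl
  | neg C ih => simp only [Interp.eval]; rw [ih hA]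
  | conj C D ihC ihD =>
      simp only [Interp.eval]
      rw [ihC fun B hB => hA B (Or.inl hB), ihD fun B hB => hA B (Or.inr hB)]
  | disj C D ihC ihD =>
      simp only [Interp.eval]
      rw [ihC fun B hB => hA B (Or.inl hB), ihD fun B hB => hA B (Or.inr hB)]
  | ex r C ih => simp only [Interp.eval]; rw [ih hA, hR r]
  | all r C ih => simp only [Interp.eval]; rw [ih hA, hR r]

/-- correctness of normalization rule NF1,
`D̂ ⊑ Ê  ⇒  D̂ ⊑ A, A ⊑ Ê` with `A` fresh. -/
theorem nf1_correct {NC NR Δ : Type} [Nonempty Δ]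
    (Dh Eh : ALCConcept NC NR) (A : NC)
    (hD : A ∉ Dh.conceptNames) (hE : A ∉ Eh.conceptNames) :
    (∀ J : Interp NC NR Δ,
        J.satInclusion Dh (.atom A) → J.satInclusion (.atom A) Eh →
          J.satInclusion Dh Eh) ∧
    (∀ I : Interp NC NR Δ, I.satInclusion Dh Eh →
        ∃ J : Interp NC NR Δ,
          (∀ B : NC, B ≠ A → J.atom B = I.atom B) ∧
          (∀ r : NR, J.role r = I.role r) ∧
          J.satInclusion Dh (.atom A) ∧ J.satInclusion (.atom A) Eh) := by
  classical
  constructor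
  · intro J h1 h2 x hx
    exact h2 (h1 hx)
  · intro I hI
    refine ⟨⟨fun B => if B = A then I.eval Dh else I.atom B, I.role⟩,
      fun B hB => if_neg hB, fun r => rfl, ?_, ?_⟩
    · have : Interp.eval ⟨fun B => if B = A then I.eval Dh else I.atom B, I.role⟩ Dh
        = I.eval Dh := by
        apply eval_congr
        · intro B hB
          exact if_neg (fun h : B = A => hD (h ▸ hB))
        · intro r; rfl
      intro x hx
      rw [this] at hx
      show x ∈ (if A = A then I.eval Dh else I.atom A)
      rw [if_pos rfl]; exact hx
    · have : Interp.eval ⟨fun B => if B = A then I.eval Dh else I.atom B, I.role⟩ Eh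
        = I.eval Eh := by
        apply eval_congr
        · intro B hB
          exact if_neg (fun h : B = A => hE (h ▸ hB))
        · intro r; rfl
      intro x hx
      rw [this]
      have : x ∈ (if A = A then I.eval Dh else I.atom A) := hx
      rw [if_pos rfl] at this
      exact hI this
end

section
/- (Correctness of normalization rule NF7.) Let B, D and Ê be ALC concepts and let A be a concept name occurring in none of B, D, Ê. (i) Every crisp interpretation J satisfying both B ⊑ D⊔A and A ⊑ Ê also satisfies B ⊑ D⊔Ê. (ii) For every crisp interpretation I satisfying B ⊑ D⊔Ê there exists a crisp interpretation J with the same domain, interpreting every concept name other than A and every role name the same as I, that satisfies both B ⊑ D⊔A and A ⊑ Ê. -/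
lemma eval_eq_of_agree {NC NR Δ : Type} (I J : Interp NC NR Δ)
    (C : ALCConcept NC NR)
    (hA : ∀ B ∈ C.conceptNames, J.atom B = I.atom B)
    (hR : ∀ r : NR, J.role r = I.role r) :
    J.eval C = I.eval C := by
  induction C with
  | top => rfl
  | bot => rfl
  | atom B => exact hA B rfl
  | neg C ih => simp [Interp.eval, ih hA]
  | conj C D ihC ihD =>
      simp only [ALCConcept.conceptNames] at hA
      simp [Interp.eval, ihC (fun B hB => hA B (Or.inl hB)),
        ihD (fun B hB => hA B (Or.inr hB))]
  | disj C D ihC ihD =>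
      simp only [ALCConcept.conceptNames] at hA
      simp [Interp.eval, ihC (fun B hB => hA B (Or.inl hB)),
        ihD (fun B hB => hA B (Or.inr hB))]
  | ex r C ih => simp [Interp.eval, ih hA, hR r]
  | all r C ih => simp [Interp.eval, ih hA, hR r]

/-- correctness of normalization rule NF7,
`B ⊑ D ⊔ Ê  ⇒  B ⊑ D ⊔ A, A ⊑ Ê` with `A` fresh. -/
theorem nf7_correct {NC NR Δ : Type} [Nonempty Δ]
    (B D Eh : ALCConcept NC NR) (A : NC)
    (hB : A ∉ B.conceptNames) (hD : A ∉ D.conceptNames)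
    (hE : A ∉ Eh.conceptNames) :
    (∀ J : Interp NC NR Δ,
        J.satInclusion B (.disj D (.atom A)) → J.satInclusion (.atom A) Eh →
          J.satInclusion B (.disj D Eh)) ∧
    (∀ I : Interp NC NR Δ, I.satInclusion B (.disj D Eh) →
        ∃ J : Interp NC NR Δ,
          (∀ B' : NC, B' ≠ A → J.atom B' = I.atom B') ∧
          (∀ r : NR, J.role r = I.role r) ∧
          J.satInclusion B (.disj D (.atom A)) ∧ J.satInclusion (.atom A) Eh) := by
  classical
  constructor
  · intro J h1 h2 a ha
    rcases h1 ha with h | h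
    · exact Or.inl h
    · exact Or.inr (h2 h)
  · intro I hI
    refine ⟨⟨fun B => if B = A then I.eval Eh else I.atom B, I.role⟩,
      fun B hB => by simp [hB], fun r => rfl, ?_, ?_⟩
    · intro a ha
      have hBe : (⟨fun B => if B = A then I.eval Eh else I.atom B, I.role⟩ :
          Interp NC NR Δ).eval B = I.eval B :=
        eval_eq_of_agree _ _ _ (fun B' hB' => by
          exact if_neg (fun (h : B' = A) => hB (h ▸ hB'))) (fun _ => rfl)
      have hDe : (⟨fun B => if B = A then I.eval Eh else I.atom B, I.role⟩ :
          Interp NC NR Δ).eval D = I.eval D :=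
        eval_eq_of_agree _ _ _ (fun B' hB' => by
          exact if_neg (fun (h : B' = A) => hD (h ▸ hB'))) (fun _ => rfl)
      rw [hBe] at ha
      rcases hI ha with h | h
      · exact Or.inl (hDe ▸ h)
      · exact Or.inr (by simp [Interp.eval]; exact h)
    · intro a ha
      have hEe : (⟨fun B => if B = A then I.eval Eh else I.atom B, I.role⟩ :
          Interp NC NR Δ).eval Eh = I.eval Eh :=
        eval_eq_of_agree _ _ _ (fun B' hB' => by
          exact if_neg (fun (h : B' = A) => hE (h ▸ hB'))) (fun _ => rfl)
      rw [hEe]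
      simpa [Interp.eval] using ha
end
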